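/- arXiv:1905.01738 — 8 statements merged into one kernel-verified Lean document; each statement's English description precedes it below -/
import Mathlib

section
/- Let a, b, v ∈ EuclideanSpace ℝ (Fin 2) be affinely independent, let L = affineSpan ℝ {a, b} be the line through a and b, let v* be the reflection of v across L, and let O and R be the circumcenter and circumradius of the triangle with vertices a, b, v. Then v* lies strictly inside the circumball of the triangle if and only if v lies strictly inside the diametral ball of [a,b]: dist v* O < R ↔ dist v (midpoint ℝ a b) < dist a b / 2. -/
open EuclideanGeometry

set_option maxHeartbeats 1000000
/-- The mirror image `v*` of a vertex `v` across the line through `a` and `b` lies strictly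
inside the circumball of the triangle `a b v` if and only if `v` lies strictly inside the
diametral ball of the segment `[a, b]`. -/
theorem reflection_mem_circumball_iff_mem_diametral_ball
    (a b v : EuclideanSpace ℝ (Fin 2))
    (h : AffineIndependent ℝ ![a, b, v]) :
    dist (EuclideanGeometry.reflection (affineSpan ℝ ({a, b} : Set (EuclideanSpace ℝ (Fin 2)))) v)
        (Affine.Simplex.circumcenter ⟨![a, b, v], h⟩) <
      Affine.Simplex.circumradius (⟨![a, b, v], h⟩ : Affine.Simplex ℝ (EuclideanSpace ℝ (Fin 2)) 2) ↔
    dist v (midpoint ℝ a b) < dist a b / 2 := by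
  classical
  set S : Affine.Simplex ℝ (EuclideanSpace ℝ (Fin 2)) 2 := ⟨![a, b, v], h⟩ with hS
  set L : AffineSubspace ℝ (EuclideanSpace ℝ (Fin 2)) := affineSpan ℝ ({a, b} : Set _) with hL
  have haL : a ∈ L := subset_affineSpan ℝ _ (by simp)
  have hbL : b ∈ L := subset_affineSpan ℝ _ (by simp)
  haveI : Nonempty L := ⟨⟨a, haL⟩⟩
  set m : EuclideanSpace ℝ (Fin 2) := midpoint ℝ a b with hm
  have hmL : m ∈ L := by
    have hmid : m = (2⁻¹ : ℝ) • (b -ᵥ a) +ᵥ a := by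
      rw [hm, midpoint_eq_smul_add]
      simp only [vsub_eq_sub, vadd_eq_add, invOf_eq_inv]
      module
    rw [hmid]
    exact AffineSubspace.smul_vsub_vadd_mem L _ hbL haL haL
  set O : EuclideanSpace ℝ (Fin 2) := S.circumcenter with hO
  have hRa : dist a O = S.circumradius := S.dist_circumcenter_eq_circumradius 0
  have hRb : dist b O = S.circumradius := S.dist_circumcenter_eq_circumradius 1
  have hRv : dist v O = S.circumradius := S.dist_circumcenter_eq_circumradius 2
  set w : EuclideanSpace ℝ (Fin 2) := O -ᵥ m with hw
  have hwperp : w ∈ L.directionᗮ := by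
    have h1 : inner ℝ (O -ᵥ m) (b -ᵥ a) = (0 : ℝ) :=
      inner_vsub_vsub_of_dist_eq_of_dist_eq
        (by rw [hm, dist_left_midpoint, dist_right_midpoint])
        (hRa.trans hRb.symm)
    have hdir : L.direction = ℝ ∙ (b -ᵥ a) := by
      rw [hL, direction_affineSpan, vectorSpan_pair_rev]
    rw [hdir, Submodule.mem_orthogonal]
    intro x hx
    obtain ⟨c, rfl⟩ := Submodule.mem_span_singleton.1 hx
    rw [real_inner_smul_left, real_inner_comm, hw, h1, mul_zero]
  set f : EuclideanSpace ℝ (Fin 2) :=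
    (EuclideanGeometry.orthogonalProjection L v : EuclideanSpace ℝ (Fin 2)) with hf
  have hfL : f ∈ L := (EuclideanGeometry.orthogonalProjection L v).2
  set p : EuclideanSpace ℝ (Fin 2) := f -ᵥ m with hp
  set q : EuclideanSpace ℝ (Fin 2) := v -ᵥ f with hq
  have hpdir : p ∈ L.direction := AffineSubspace.vsub_mem_direction hfL hmL
  have hadir : (a -ᵥ m) ∈ L.direction := AffineSubspace.vsub_mem_direction haL hmL
  have hqperp : q ∈ L.directionᗮ :=
    vsub_orthogonalProjection_mem_direction_orthogonal L v
  -- inner ℝ product facts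
  have hpq : inner ℝ p q = (0 : ℝ) := (Submodule.mem_orthogonal _ _).1 hqperp p hpdir
  have hqp : inner ℝ q p = (0 : ℝ) := by rw [real_inner_comm]; exact hpq
  have hpw : inner ℝ p w = (0 : ℝ) := (Submodule.mem_orthogonal _ _).1 hwperp p hpdir
  have hwp : inner ℝ w p = (0 : ℝ) := by rw [real_inner_comm]; exact hpw
  have haq : inner ℝ (a -ᵥ m) q = (0 : ℝ) := (Submodule.mem_orthogonal _ _).1 hqperp _ hadir
  have haw : inner ℝ (a -ᵥ m) w = (0 : ℝ) := (Submodule.mem_orthogonal _ _).1 hwperp _ hadir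
  have hwa : inner ℝ w (a -ᵥ m) = (0 : ℝ) := by rw [real_inner_comm]; exact haw
  -- vector identities
  have hrefl : reflection L v = (f -ᵥ v) +ᵥ f := by
    rw [EuclideanGeometry.reflection_apply', hf]
  have e1 : reflection L v -ᵥ O = p - q - w := by
    rw [hrefl, hp, hq, hw]
    simp only [vsub_eq_sub, vadd_eq_add]
    abel
  have e2 : v -ᵥ O = p + q - w := by
    rw [hp, hq, hw]; simp only [vsub_eq_sub]; abel
  have e3 : v -ᵥ m = p + q := by
    rw [hp, hq]; simp only [vsub_eq_sub]; abel
  have e4 : a -ᵥ O = (a -ᵥ m) - w := by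
    rw [hw]; simp only [vsub_eq_sub]; abel
  -- squared distance computations
  have d1 : dist (reflection L v) O ^ 2
      = ‖p‖ ^ 2 + ‖q‖ ^ 2 + ‖w‖ ^ 2 + 2 * inner ℝ q w := by
    rw [dist_eq_norm_vsub (EuclideanSpace ℝ (Fin 2)), e1,
      ← real_inner_self_eq_norm_sq, ← real_inner_self_eq_norm_sq p,
      ← real_inner_self_eq_norm_sq q, ← real_inner_self_eq_norm_sq w]
    simp only [inner_sub_left, inner_sub_right]
    rw [real_inner_comm w q] at *
    linarith [hpq, hqp, hpw, hwp]
  have d2 : dist v O ^ 2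
      = ‖p‖ ^ 2 + ‖q‖ ^ 2 + ‖w‖ ^ 2 - 2 * inner ℝ q w := by
    rw [dist_eq_norm_vsub (EuclideanSpace ℝ (Fin 2)), e2,
      ← real_inner_self_eq_norm_sq, ← real_inner_self_eq_norm_sq p,
      ← real_inner_self_eq_norm_sq q, ← real_inner_self_eq_norm_sq w]
    simp only [inner_sub_left, inner_sub_right, inner_add_left, inner_add_right]
    rw [real_inner_comm w q] at *
    linarith [hpq, hqp, hpw, hwp]
  have d3 : dist v m ^ 2 = ‖p‖ ^ 2 + ‖q‖ ^ 2 := by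
    rw [dist_eq_norm_vsub (EuclideanSpace ℝ (Fin 2)), e3,
      ← real_inner_self_eq_norm_sq, ← real_inner_self_eq_norm_sq p,
      ← real_inner_self_eq_norm_sq q]
    simp only [inner_add_left, inner_add_right]
    linarith [hpq, hqp]
  have d4 : dist a O ^ 2 = ‖a -ᵥ m‖ ^ 2 + ‖w‖ ^ 2 := by
    rw [dist_eq_norm_vsub (EuclideanSpace ℝ (Fin 2)), e4,
      ← real_inner_self_eq_norm_sq, ← real_inner_self_eq_norm_sq (a -ᵥ m),
      ← real_inner_self_eq_norm_sq w]
    simp only [inner_sub_left, inner_sub_right]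
    linarith [haw, hwa]
  have d5' : ‖a -ᵥ m‖ = dist a b / 2 := by
    rw [← dist_eq_norm_vsub (EuclideanSpace ℝ (Fin 2)), hm, dist_left_midpoint]
    norm_num
    ring
  -- key identity
  have key : dist (reflection L v) O ^ 2 - S.circumradius ^ 2
      = 2 * (dist v m ^ 2 - (dist a b / 2) ^ 2) := by
    have h4 : S.circumradius ^ 2 = (dist a b / 2) ^ 2 + ‖w‖ ^ 2 := by
      rw [← hRa, d4, d5']
    have h2 : S.circumradius ^ 2 = ‖p‖ ^ 2 + ‖q‖ ^ 2 + ‖w‖ ^ 2 - 2 * inner ℝ q w := by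
      rw [← hRv, d2]
    rw [d1, d3]
    nlinarith [h4, h2]
  have hRnn : (0 : ℝ) ≤ S.circumradius := by rw [← hRv]; exact dist_nonneg
  have hd1nn : (0 : ℝ) ≤ dist (reflection L v) O := dist_nonneg
  have hd3nn : (0 : ℝ) ≤ dist v m := dist_nonneg
  have habnn : (0 : ℝ) ≤ dist a b / 2 := by positivity
  constructor
  · intro hlt
    nlinarith [key, hlt, hRnn, hd1nn, hd3nn, habnn]
  · intro hlt
    nlinarith [key, hlt, hRnn, hd1nn, hd3nn, habnn]
end

section
/- Let a, b, c, d ∈ EuclideanSpace ℝ (Fin 2) be such that {a, b, c} and {a, b, d} are each affinely independent, and c and d lie strictly on opposite sides of the line affineSpan ℝ {a, b}. Then d lies strictly inside the circumball of the triangle a b c if and only if c lies strictly inside the circumball of the triangle a b d; that is, dist d O₁ < R₁ ↔ dist c O₂ < R₂, where O₁, R₁ and O₂, R₂ are the circumcenters and circumradii of the triangles a b c and a b d respectively. -/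
open EuclideanGeometry

/-- Symmetry of the Delaunay empty-circumcircle test for two triangles `a b c` and `a b d`
sharing the edge `a b`, with `c` and `d` strictly on opposite sides of the line through
`a` and `b`: `d` lies strictly inside the circumball of `a b c` iff `c` lies strictly inside
the circumball of `a b d`. -/
theorem delaunay_incircle_test_symm
    (a b c d : EuclideanSpace ℝ (Fin 2))
    (habc : AffineIndependent ℝ ![a, b, c])
    (habd : AffineIndependent ℝ ![a, b, d])
    (hside : (affineSpan ℝ ({a, b} : Set (EuclideanSpace ℝ (Fin 2)))).SOppSide c d) :
    dist d (Affine.Simplex.circumcenter ⟨![a, b, c], habc⟩) <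
        Affine.Simplex.circumradius (⟨![a, b, c], habc⟩ : Affine.Simplex ℝ (EuclideanSpace ℝ (Fin 2)) 2) ↔
      dist c (Affine.Simplex.circumcenter ⟨![a, b, d], habd⟩) <
        Affine.Simplex.circumradius (⟨![a, b, d], habd⟩ : Affine.Simplex ℝ (EuclideanSpace ℝ (Fin 2)) 2) := by
  set T₁ : Affine.Simplex ℝ (EuclideanSpace ℝ (Fin 2)) 2 := ⟨![a, b, c], habc⟩ with hT₁
  set T₂ : Affine.Simplex ℝ (EuclideanSpace ℝ (Fin 2)) 2 := ⟨![a, b, d], habd⟩ with hT₂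
  set O₁ := T₁.circumcenter
  set O₂ := T₂.circumcenter
  set R₁ := T₁.circumradius
  set R₂ := T₂.circumradius
  have ha1 : dist a O₁ = R₁ := by
    exact T₁.dist_circumcenter_eq_circumradius 0
  have hb1 : dist b O₁ = R₁ := by
    exact T₁.dist_circumcenter_eq_circumradius 1
  have hc1 : dist c O₁ = R₁ := by
    exact T₁.dist_circumcenter_eq_circumradius 2
  have ha2 : dist a O₂ = R₂ := by
    exact T₂.dist_circumcenter_eq_circumradius 0
  have hb2 : dist b O₂ = R₂ := by
    exact T₂.dist_circumcenter_eq_circumradius 1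
  have hd2 : dist d O₂ = R₂ := by
    exact T₂.dist_circumcenter_eq_circumradius 2
  -- the affine "power difference" function
  set g : EuclideanSpace ℝ (Fin 2) → ℝ := fun x => dist x O₁ ^ 2 - dist x O₂ ^ 2 with hg
  have key : ∀ x : EuclideanSpace ℝ (Fin 2),
      g x = ‖O₁‖ ^ 2 - ‖O₂‖ ^ 2 - 2 * inner ℝ x O₁ + 2 * (inner ℝ x O₂ : ℝ) := by
    intro x
    simp only [hg, dist_eq_norm, norm_sub_sq_real]
    ring
  -- affinity of g along line maps
  have gaff : ∀ (x y : EuclideanSpace ℝ (Fin 2)) (t : ℝ),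
      g (AffineMap.lineMap x y t) = (1 - t) * g x + t * g y := by
    intro x y t
    have hl : (AffineMap.lineMap x y t : EuclideanSpace ℝ (Fin 2)) = t • (y - x) + x := by
      simp [AffineMap.lineMap_apply, vsub_eq_sub, vadd_eq_add]
    rw [key, key, key, hl]
    simp only [inner_add_left, inner_smul_left, inner_sub_left, RCLike.inner_apply,
      conj_trivial, map_sub]
    ring
  -- g is constant R₁^2 - R₂^2 on the line through a and b
  have gline : ∀ p : EuclideanSpace ℝ (Fin 2),
      p ∈ affineSpan ℝ ({a, b} : Set (EuclideanSpace ℝ (Fin 2))) → g p = R₁ ^ 2 - R₂ ^ 2 := by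
    intro p hp
    have hpa : (p - a) +ᵥ a ∈ affineSpan ℝ ({a, b} : Set (EuclideanSpace ℝ (Fin 2))) := by
      simpa [vadd_eq_add, sub_add_cancel] using hp
    obtain ⟨r, hr⟩ := vadd_left_mem_affineSpan_pair.1 hpa
    have hplm : p = AffineMap.lineMap a b r := by
      have : (AffineMap.lineMap a b r : EuclideanSpace ℝ (Fin 2)) = r • (b - a) + a := by
        simp [AffineMap.lineMap_apply, vsub_eq_sub, vadd_eq_add]
      rw [this]
      rw [vsub_eq_sub] at hr
      rw [hr]
      abel
    have hga : g a = R₁ ^ 2 - R₂ ^ 2 := by simp [hg, ha1, ha2]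
    have hgb : g b = R₁ ^ 2 - R₂ ^ 2 := by simp [hg, hb1, hb2]
    rw [hplm, gaff, hga, hgb]
    ring
  -- extract the strictly-between point
  obtain ⟨p, hp, hsb⟩ := hside.exists_sbtw
  obtain ⟨⟨t, ⟨ht0, ht1⟩, hlp⟩, hpc, hpd⟩ := hsb
  have ht0' : t ≠ 0 := by
    rintro rfl; exact hpc (by simpa using hlp.symm)
  have ht1' : t ≠ 1 := by
    rintro rfl; exact hpd (by simpa using hlp.symm)
  have ht0'' : 0 < t := lt_of_le_of_ne ht0 (Ne.symm ht0')
  have ht1'' : t < 1 := lt_of_le_of_ne ht1 ht1'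
  -- evaluate g at p
  have hgp : g p = R₁ ^ 2 - R₂ ^ 2 := gline p hp
  have heval : (1 - t) * g c + t * g d = R₁ ^ 2 - R₂ ^ 2 := by
    rw [← gaff, hlp, hgp]
  have hgc : g c = R₁ ^ 2 - dist c O₂ ^ 2 := by simp [hg, hc1]
  have hgd : g d = dist d O₁ ^ 2 - R₂ ^ 2 := by simp [hg, hd2]
  rw [hgc, hgd] at heval
  -- key sign relation: t * u = (1 - t) * v
  have hrel : t * (dist d O₁ ^ 2 - R₁ ^ 2) = (1 - t) * (dist c O₂ ^ 2 - R₂ ^ 2) := by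
    nlinarith [heval]
  have hR₁ : 0 ≤ R₁ := ha1 ▸ dist_nonneg
  have hR₂ : 0 ≤ R₂ := ha2 ▸ dist_nonneg
  rw [← pow_lt_pow_iff_left₀ dist_nonneg hR₁ two_ne_zero,
      ← pow_lt_pow_iff_left₀ dist_nonneg hR₂ two_ne_zero]
  constructor
  · intro h
    nlinarith
  · intro h
    nlinarith
end

section
/- Let a, b, c be an affinely independent triple in a Euclidean space, with circumcenter O and circumradius R of the triangle a b c. Then the distance from the circumcenter to the midpoint of the edge ab equals R times the absolute value of the cosine of the opposite angle: dist O (midpoint ℝ a b) = R * |cos (∠ a c b)|. -/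
open EuclideanGeometry Real
open scoped RealInnerProductSpace

private lemma aux_gram (R p q r : ℝ) (h1 : R ^ 2 - q ≠ 0) (h2 : R ^ 2 - r ≠ 0)
    (hdet : (R ^ 2) ^ 3 + 2 * p * q * r - R ^ 2 * (p ^ 2 + q ^ 2 + r ^ 2) = 0) :
    (R ^ 2 + p) / 2 =
      R ^ 2 * ((R ^ 2 + p - q - r) ^ 2 / (2 * (R ^ 2 - q) * (2 * (R ^ 2 - r)))) := by
  field_simp
  linear_combination hdet

/-- The distance from the circumcenter of a triangle `a b c` to the midpoint of the edge
`a b` equals the circumradius times the absolute value of the cosine of the opposite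
angle `∠ a c b`. -/
theorem dist_circumcenter_midpoint_eq_circumradius_mul_abs_cos_angle
    {d : ℕ} (a b c : EuclideanSpace ℝ (Fin d))
    (h : AffineIndependent ℝ ![a, b, c]) :
    dist (Affine.Simplex.circumcenter (⟨![a, b, c], h⟩ : Affine.Simplex ℝ (EuclideanSpace ℝ (Fin d)) 2))
        (midpoint ℝ a b) =
      Affine.Simplex.circumradius (⟨![a, b, c], h⟩ : Affine.Simplex ℝ (EuclideanSpace ℝ (Fin d)) 2) *
        |cos (∠ a c b)| := by
  set T : Affine.Simplex ℝ (EuclideanSpace ℝ (Fin d)) 2 := ⟨![a, b, c], h⟩ with hT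
  set O := T.circumcenter with hO
  set R := T.circumradius with hRdef
  have hpa : T.points 0 = a := rfl
  have hpb : T.points 1 = b := rfl
  have hpc : T.points 2 = c := rfl
  set u : EuclideanSpace ℝ (Fin d) := a - O with hu_def
  set v : EuclideanSpace ℝ (Fin d) := b - O with hv_def
  set w : EuclideanSpace ℝ (Fin d) := c - O with hw_def
  have hu : ‖u‖ = R := by
    rw [hu_def, ← dist_eq_norm, ← hpa]; exact T.dist_circumcenter_eq_circumradius 0
  have hv : ‖v‖ = R := by
    rw [hv_def, ← dist_eq_norm, ← hpb]; exact T.dist_circumcenter_eq_circumradius 1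
  have hw : ‖w‖ = R := by
    rw [hw_def, ← dist_eq_norm, ← hpc]; exact T.dist_circumcenter_eq_circumradius 2
  obtain ⟨t, ht, hOt⟩ :=
    eq_affineCombination_of_mem_affineSpan_of_fintype T.circumcenter_mem_affineSpan
  have hzero : t 0 • u + t 1 • v + t 2 • w = 0 := by
    have h0 : ∑ i : Fin 3, t i • (T.points i -ᵥ O) = (0 : EuclideanSpace ℝ (Fin d)) := by
      rw [Finset.sum_smul_vsub_const_eq_affineCombination_vsub _ t T.points O ht, ← hOt,
        vsub_self]
    simpa [Fin.sum_univ_three, hpa, hpb, hpc, vsub_eq_sub, hu_def, hv_def, hw_def] using h0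
  have hsum : t 0 + t 1 + t 2 = 1 := by simpa [Fin.sum_univ_three] using ht
  set p : ℝ := ⟪u, v⟫ with hp_def
  set q : ℝ := ⟪u, w⟫ with hq_def
  set r : ℝ := ⟪v, w⟫ with hr_def
  have E1 : t 0 * R ^ 2 + t 1 * p + t 2 * q = 0 := by
    have h0 := congrArg (fun x => ⟪u, x⟫) hzero
    simp only [inner_add_right, inner_smul_right, inner_zero_right] at h0
    rw [real_inner_self_eq_norm_sq, hu] at h0
    linarith
  have E2 : t 0 * p + t 1 * R ^ 2 + t 2 * r = 0 := by
    have h0 := congrArg (fun x => ⟪v, x⟫) hzero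
    simp only [inner_add_right, inner_smul_right, inner_zero_right] at h0
    rw [real_inner_self_eq_norm_sq, hv] at h0
    rw [hp_def, hr_def]
    linear_combination h0 + t 0 * real_inner_comm v u
  have E3 : t 0 * q + t 1 * r + t 2 * R ^ 2 = 0 := by
    have h0 := congrArg (fun x => ⟪w, x⟫) hzero
    simp only [inner_add_right, inner_smul_right, inner_zero_right] at h0
    rw [real_inner_self_eq_norm_sq, hw] at h0
    rw [hq_def, hr_def]
    linear_combination h0 + t 0 * real_inner_comm w u + t 1 * real_inner_comm w v
  have hdet : (R ^ 2) ^ 3 + 2 * p * q * r - R ^ 2 * (p ^ 2 + q ^ 2 + r ^ 2) = 0 := by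
    linear_combination
      ((R ^ 2) ^ 2 - r ^ 2 + q * r - p * R ^ 2 + p * r - q * R ^ 2) * E1 +
      (q * r - p * R ^ 2 + (R ^ 2) ^ 2 - q ^ 2 + p * q - r * R ^ 2) * E2 +
      (p * r - q * R ^ 2 + p * q - r * R ^ 2 + (R ^ 2) ^ 2 - p ^ 2) * E3 -
      ((R ^ 2) ^ 3 + 2 * p * q * r - R ^ 2 * (p ^ 2 + q ^ 2 + r ^ 2)) * hsum
  -- nondegeneracy
  have hac : a ≠ c := by
    intro hac
    have : (0 : Fin 3) = 2 := h.injective (by simp [hac])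
    exact absurd this (by decide)
  have hbc : b ≠ c := by
    intro hbc
    have : (1 : Fin 3) = 2 := h.injective (by simp [hbc])
    exact absurd this (by decide)
  have hacw : a - c = u - w := by rw [hu_def, hw_def]; abel
  have hbcw : b - c = v - w := by rw [hv_def, hw_def]; abel
  have hx2 : ‖a - c‖ ^ 2 = 2 * (R ^ 2 - q) := by
    rw [hacw, norm_sub_sq_real, hu, hw, ← hq_def]; ring
  have hy2 : ‖b - c‖ ^ 2 = 2 * (R ^ 2 - r) := by
    rw [hbcw, norm_sub_sq_real, hv, hw, ← hr_def]; ring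
  have hxne : ‖a - c‖ ≠ 0 := by
    simpa [sub_eq_zero] using hac
  have hyne : ‖b - c‖ ≠ 0 := by
    simpa [sub_eq_zero] using hbc
  have hinner : ⟪a - c, b - c⟫ = R ^ 2 + p - q - r := by
    rw [hacw, hbcw, hp_def, hq_def, hr_def]
    simp only [inner_sub_left, inner_sub_right]
    rw [real_inner_self_eq_norm_sq, hw]
    linear_combination real_inner_comm w v
  have hcos : Real.cos (∠ a c b) = (R ^ 2 + p - q - r) / (‖a - c‖ * ‖b - c‖) := by
    rw [EuclideanGeometry.angle, InnerProductGeometry.cos_angle]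
    simp only [vsub_eq_sub]
    rw [hinner]
  -- left side squared
  have hmid : O - midpoint ℝ a b = (-(1 / 2) : ℝ) • (u + v) := by
    rw [midpoint_eq_smul_add, invOf_eq_inv, hu_def, hv_def]
    have h2 : (2 : ℝ)⁻¹ • (a + b) = (2 : ℝ)⁻¹ • a + (2 : ℝ)⁻¹ • b := smul_add _ _ _
    rw [h2]
    module
  have hL : dist O (midpoint ℝ a b) ^ 2 = (R ^ 2 + p) / 2 := by
    rw [dist_eq_norm, hmid, norm_smul]
    rw [mul_pow, norm_add_sq_real, hu, hv, ← hp_def]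
    simp [abs_of_nonneg]
    ring
  have hRnn : (0 : ℝ) ≤ R := T.circumradius_nonneg
  have hsq : dist O (midpoint ℝ a b) ^ 2 = (R * |Real.cos (∠ a c b)|) ^ 2 := by
    rw [hL, mul_pow, sq_abs, hcos, div_pow, mul_pow, hx2, hy2]
    have h1 : R ^ 2 - q ≠ 0 := by
      intro h0
      apply hxne
      rw [← sq_eq_zero_iff, hx2, h0, mul_zero]
    have h2 : R ^ 2 - r ≠ 0 := by
      intro h0
      apply hyne
      rw [← sq_eq_zero_iff, hy2, h0, mul_zero]
    exact aux_gram R p q r h1 h2 hdet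
  have hd0 : 0 ≤ dist O (midpoint ℝ a b) := dist_nonneg
  have he0 : 0 ≤ R * |Real.cos (∠ a c b)| := mul_nonneg hRnn (abs_nonneg _)
  calc dist O (midpoint ℝ a b) = Real.sqrt (dist O (midpoint ℝ a b) ^ 2) :=
        (Real.sqrt_sq hd0).symm
    _ = Real.sqrt ((R * |Real.cos (∠ a c b)|) ^ 2) := by rw [hsq]
    _ = R * |Real.cos (∠ a c b)| := Real.sqrt_sq he0
end

section
/- Let a, b, c be an affinely independent triple in a Euclidean space, with circumcenter O of the triangle a b c. Then dist O (midpoint ℝ a b) * sin (∠ a c b) = (dist a b / 2) * |cos (∠ a c b)|; equivalently, the ratio of the Voronoi face length dual to the edge ab contributed by the triangle to the edge length dist a b is half the absolute cotangent of the opposite angle. (Since a, b, c are affinely independent, sin (∠ a c b) > 0.) -/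
open EuclideanGeometry Real

/-- Cotangent-weight identity: for a triangle `a b c` with circumcenter `O`, the Voronoi face
length contributed by the triangle to the edge `a b`, namely `dist O (midpoint ℝ a b)`, satisfies
`dist O (midpoint ℝ a b) * sin (∠ a c b) = (dist a b / 2) * |cos (∠ a c b)|`. -/
theorem dist_circumcenter_midpoint_mul_sin_angle
    {d : ℕ} (a b c : EuclideanSpace ℝ (Fin d))
    (h : AffineIndependent ℝ ![a, b, c]) :
    dist (Affine.Simplex.circumcenter (⟨![a, b, c], h⟩ : Affine.Simplex ℝ (EuclideanSpace ℝ (Fin d)) 2))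
        (midpoint ℝ a b) * sin (∠ a c b) =
      (dist a b / 2) * |cos (∠ a c b)| := by
  set S : Affine.Simplex ℝ (EuclideanSpace ℝ (Fin d)) 2 := ⟨![a, b, c], h⟩ with hS
  set O := S.circumcenter with hO
  set e₁ := a - c with he₁
  set e₂ := b - c with he₂
  -- nondegeneracy
  have hac : a ≠ c := by
    intro hh
    exact (by decide : (0 : Fin 3) ≠ 2) (h.injective (by simp [hh]))
  have hbc : b ≠ c := by
    intro hh
    exact (by decide : (1 : Fin 3) ≠ 2) (h.injective (by simp [hh]))
  have he₁0 : e₁ ≠ 0 := sub_ne_zero.mpr hac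
  have he₂0 : e₂ ≠ 0 := sub_ne_zero.mpr hbc
  have hn₁0 : (0:ℝ) < ‖e₁‖ := norm_pos_iff.2 he₁0
  have hn₂0 : (0:ℝ) < ‖e₂‖ := norm_pos_iff.2 he₂0
  -- O is in the plane of a b c
  have hmem : O ∈ affineSpan ℝ (Set.range ![a, b, c]) := S.circumcenter_mem_affineSpan
  have hcr : c ∈ Set.range ![a, b, c] := ⟨2, rfl⟩
  have hcmem : c ∈ affineSpan ℝ (Set.range ![a, b, c]) := mem_affineSpan ℝ hcr
  have hw : O -ᵥ c ∈ vectorSpan ℝ (Set.range ![a, b, c]) := by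
    rw [← direction_affineSpan]
    exact AffineSubspace.vsub_mem_direction hmem hcmem
  have hspan : vectorSpan ℝ (Set.range ![a, b, c]) ≤ Submodule.span ℝ {e₁, e₂} := by
    rw [vectorSpan_eq_span_vsub_set_right ℝ hcr]
    apply Submodule.span_le.2
    rintro x ⟨y, ⟨i, rfl⟩, rfl⟩
    fin_cases i
    · exact Submodule.subset_span (by left; rfl)
    · exact Submodule.subset_span (by right; rfl)
    · simp [vsub_eq_sub]
  obtain ⟨α, β, hαβ⟩ := Submodule.mem_span_pair.1 (hspan hw)
  have hOc : O - c = α • e₁ + β • e₂ := hαβ.symm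
  -- inner product abbreviations
  obtain ⟨A, hA⟩ : ∃ x, (inner ℝ e₁ e₁ : ℝ) = x := ⟨_, rfl⟩
  obtain ⟨B, hB⟩ : ∃ x, (inner ℝ e₁ e₂ : ℝ) = x := ⟨_, rfl⟩
  obtain ⟨C, hC⟩ : ∃ x, (inner ℝ e₂ e₂ : ℝ) = x := ⟨_, rfl⟩
  have expand : ∀ s t : ℝ, (inner ℝ (s • e₁ + t • e₂) (s • e₁ + t • e₂) : ℝ)
      = s ^ 2 * A + 2 * s * t * B + t ^ 2 * C := by
    intro s t
    simp only [inner_add_left, inner_add_right, real_inner_smul_left, real_inner_smul_right]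
    linear_combination (s^2) * hA + (2*s*t) * hB + (t^2) * hC
      - (s*t) * (real_inner_comm e₂ e₁)
  have hn₁ : ‖e₁‖ ^ 2 = A := by
    linear_combination hA - real_inner_self_eq_norm_sq e₁
  have hn₂ : ‖e₂‖ ^ 2 = C := by
    linear_combination hC - real_inner_self_eq_norm_sq e₂
  have hApos : (0:ℝ) < A := hn₁ ▸ by positivity
  have hCpos : (0:ℝ) < C := hn₂ ▸ by positivity
  -- circumcenter distance equalities
  have hda : dist O a = S.circumradius := S.dist_circumcenter_eq_circumradius' 0
  have hdb : dist O b = S.circumradius := S.dist_circumcenter_eq_circumradius' 1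
  have hdc : dist O c = S.circumradius := S.dist_circumcenter_eq_circumradius' 2
  have hOa : O - a = (α - 1) • e₁ + β • e₂ := by
    have hh : O - a = (O - c) - e₁ := by rw [he₁]; abel
    rw [hh, hOc]; module
  have hOb : O - b = α • e₁ + (β - 1) • e₂ := by
    have hh : O - b = (O - c) - e₂ := by rw [he₂]; abel
    rw [hh, hOc]; module
  have hnorm : ∀ x y : EuclideanSpace ℝ (Fin d), dist x y ^ 2 = (inner ℝ (x - y) (x - y) : ℝ) := by
    intro x y; rw [dist_eq_norm, real_inner_self_eq_norm_sq]
  have hg1 : (2 * α - 1) * A + 2 * β * B = 0 := by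
    have h1 : dist O a ^ 2 = dist O c ^ 2 := by rw [hda, hdc]
    rw [hnorm, hnorm, hOa, hOc, expand, expand] at h1
    linarith
  have hg2 : (2 * β - 1) * C + 2 * α * B = 0 := by
    have h1 : dist O b ^ 2 = dist O c ^ 2 := by rw [hdb, hdc]
    rw [hnorm, hnorm, hOb, hOc, expand, expand] at h1
    linarith
  -- midpoint
  have hOm : O - midpoint ℝ a b = (α - 1/2) • e₁ + (β - 1/2) • e₂ := by
    have hm : midpoint ℝ a b - c = (1/2 : ℝ) • e₁ + (1/2 : ℝ) • e₂ := by
      rw [midpoint_eq_smul_add, he₁, he₂, invOf_eq_inv]; module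
    have hh : O - midpoint ℝ a b = (O - c) - (midpoint ℝ a b - c) := by abel
    rw [hh, hOc, hm]; module
  have hDm : dist O (midpoint ℝ a b) ^ 2
      = (α - 1/2) ^ 2 * A + 2 * (α - 1/2) * (β - 1/2) * B + (β - 1/2) ^ 2 * C := by
    rw [hnorm, hOm, expand]
  have hab : dist a b ^ 2 = A - 2 * B + C := by
    have hh : a - b = (1 : ℝ) • e₁ + (-1 : ℝ) • e₂ := by rw [he₁, he₂]; module
    rw [hnorm, hh, expand]; ring
  -- key polynomial identity
  have key : dist O (midpoint ℝ a b) ^ 2 * (A * C - B ^ 2) = dist a b ^ 2 / 4 * B ^ 2 := by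
    rw [hDm, hab]
    linear_combination (((α - 1/2) * (A * C - B ^ 2) - B * (C - B) / 2) / 2) * hg1
      + (((β - 1/2) * (A * C - B ^ 2) - B * (A - B) / 2) / 2) * hg2
  -- angle facts
  have hangle : ∠ a c b = InnerProductGeometry.angle e₁ e₂ := rfl
  have hcos : cos (∠ a c b) * (‖e₁‖ * ‖e₂‖) = B := by
    rw [hangle]
    linear_combination InnerProductGeometry.cos_angle_mul_norm_mul_norm e₁ e₂ + hB
  have hs2 : sin (∠ a c b) ^ 2 = 1 - cos (∠ a c b) ^ 2 := Real.sin_sq _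
  have hB2 : cos (∠ a c b) ^ 2 * (A * C) = B ^ 2 := by
    linear_combination (cos (∠ a c b) * (‖e₁‖ * ‖e₂‖) + B) * hcos
      - cos (∠ a c b) ^ 2 * A * hn₂ - cos (∠ a c b) ^ 2 * ‖e₂‖ ^ 2 * hn₁
  -- squared goal
  have hsq : (dist O (midpoint ℝ a b) * sin (∠ a c b)) ^ 2
      = (dist a b / 2 * |cos (∠ a c b)|) ^ 2 := by
    apply mul_right_cancel₀ (show (A * C : ℝ) ≠ 0 from ne_of_gt (mul_pos hApos hCpos))
    have goal' : dist O (midpoint ℝ a b) ^ 2 * sin (∠ a c b) ^ 2 * (A * C)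
        = dist a b ^ 2 / 4 * cos (∠ a c b) ^ 2 * (A * C) := by
      linear_combination (dist O (midpoint ℝ a b) ^ 2 * (A * C)) * hs2 + key
        + (-(dist O (midpoint ℝ a b) ^ 2) - dist a b ^ 2 / 4) * hB2
    linear_combination goal' - (dist a b ^ 2 * (A * C) / 4) * sq_abs (cos (∠ a c b))
  have hL : 0 ≤ dist O (midpoint ℝ a b) * sin (∠ a c b) :=
    mul_nonneg dist_nonneg
      (Real.sin_nonneg_of_nonneg_of_le_pi (angle_nonneg _ _ _) (angle_le_pi _ _ _))
  have hR : 0 ≤ dist a b / 2 * |cos (∠ a c b)| :=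
    mul_nonneg (by positivity) (abs_nonneg _)
  calc dist O (midpoint ℝ a b) * sin (∠ a c b)
      = √((dist O (midpoint ℝ a b) * sin (∠ a c b)) ^ 2) := (Real.sqrt_sq hL).symm
    _ = √((dist a b / 2 * |cos (∠ a c b)|) ^ 2) := by rw [hsq]
    _ = dist a b / 2 * |cos (∠ a c b)| := Real.sqrt_sq hR
end

section
/- Let n : ℕ, let w : Fin n → Fin n → ℝ be symmetric with w i j ≥ 0 for all i, j, let B ⊆ Fin n be a nonempty set of boundary vertices, and let u : Fin n → ℝ satisfy the discrete Laplace equation at every interior vertex: for all i ∉ B, ∑_j w i j * (u i − u j) = 0. Assume every interior vertex is connected to the boundary through positive weights: for every i ∉ B there exist m ≥ 1 and indices i = k₀, k₁, …, k_m with w k_t k_{t+1} > 0 for all t < m and k_m ∈ B. Then for every vertex i, min_{b ∈ B} u b ≤ u i ≤ max_{b ∈ B} u b (weak discrete maximum principle). -/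
/-!
At a maximiser `p` of `u` the Laplace equation `∑ⱼ w p j (u p - u j) = 0` is a sum of nonnegative
terms, so `u q = u p` for every neighbour `q` with `w p q > 0`. Hence a maximum attained off the
boundary propagates along a path of positive weights until the path reaches `B`; applying this to
`-u` gives the lower bound.
-/

open Finset

variable {ι : Type*} [Fintype ι]

noncomputable def weightedLaplacian (w : ι → ι → ℝ) (u : ι → ℝ) (i : ι) : ℝ :=
  ∑ j, w i j * (u i - u j)

lemma weightedLaplacian_neg (w : ι → ι → ℝ) (u : ι → ℝ) :
    weightedLaplacian w (-u) = -weightedLaplacian w u := by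
  ext i
  simp only [weightedLaplacian, Pi.neg_apply, ← Finset.sum_neg_distrib]
  exact Finset.sum_congr rfl fun j _ => by ring

lemma eq_of_weightedLaplacian_eq_zero_of_isMax {w : ι → ι → ℝ} (hw : ∀ i j, 0 ≤ w i j)
    {u : ι → ℝ} {p q : ι} (hp : weightedLaplacian w u p = 0) (hmax : ∀ j, u j ≤ u p)
    (hpq : 0 < w p q) : u q = u p := by
  have hterm : ∀ j ∈ univ, 0 ≤ w p j * (u p - u j) :=
    fun j _ => mul_nonneg (hw p j) (sub_nonneg.2 (hmax j))
  have hq := (sum_eq_zero_iff_of_nonneg hterm).1 hp q (mem_univ q)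
  linarith [(mul_eq_zero.1 hq).resolve_left hpq.ne']

lemma exists_mem_le_of_path {w : ι → ι → ℝ} (hw : ∀ i j, 0 ≤ w i j) {B : Finset ι}
    {u : ι → ℝ} (harm : ∀ i ∉ B, weightedLaplacian w u i = 0) {m : ℕ} {k : Fin (m + 1) → ι}
    (hk : ∀ t : Fin m, 0 < w (k t.castSucc) (k t.succ)) (hkB : k (Fin.last m) ∈ B)
    (hmax : ∀ j, u j ≤ u (k 0)) : ∃ b ∈ B, u (k 0) ≤ u b := by
  by_contra! hlt
  have hconst : ∀ t, u (k t) = u (k 0) := by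
    refine Fin.induction rfl fun t ht => ?_
    have hnotB : k t.castSucc ∉ B := fun hB => (hlt _ hB).ne ht
    rw [← ht] at hmax ⊢
    exact eq_of_weightedLaplacian_eq_zero_of_isMax hw (harm _ hnotB) hmax (hk t)
  exact (hlt _ hkB).ne (hconst _)

lemma exists_mem_le_of_connected {w : ι → ι → ℝ} (hw : ∀ i j, 0 ≤ w i j) {B : Finset ι}
    {u : ι → ℝ} (harm : ∀ i ∉ B, weightedLaplacian w u i = 0)
    (conn : ∀ i ∉ B, ∃ m : ℕ, ∃ k : Fin (m + 1) → ι,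
      k 0 = i ∧ (∀ t : Fin m, 0 < w (k t.castSucc) (k t.succ)) ∧ k (Fin.last m) ∈ B)
    (i : ι) : ∃ b ∈ B, u i ≤ u b := by
  have : Nonempty ι := ⟨i⟩
  obtain ⟨x, hx⟩ := Finite.exists_max u
  suffices h : ∃ b ∈ B, u x ≤ u b from
    let ⟨b, hb, hxb⟩ := h; ⟨b, hb, (hx i).trans hxb⟩
  by_cases hxB : x ∈ B
  · exact ⟨x, hxB, le_rfl⟩
  obtain ⟨m, k, rfl, hk, hkB⟩ := conn x hxB
  exact exists_mem_le_of_path hw harm hk hkB hx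

theorem weak_discrete_maximum_principle_general
    (n : ℕ) (w : Fin n → Fin n → ℝ)
    (hw : ∀ i j, 0 ≤ w i j)
    (B : Finset (Fin n)) (hB : B.Nonempty) (u : Fin n → ℝ)
    (harm : ∀ i ∉ B, ∑ j, w i j * (u i - u j) = 0)
    (conn : ∀ i ∉ B, ∃ m : ℕ, 1 ≤ m ∧ ∃ k : Fin (m + 1) → Fin n,
      k 0 = i ∧ (∀ t : Fin m, 0 < w (k t.castSucc) (k t.succ)) ∧ k (Fin.last m) ∈ B) :
    ∀ i, B.inf' hB u ≤ u i ∧ u i ≤ B.sup' hB u := by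
  have hpath := fun i hi => (conn i hi).imp fun _ => And.right
  have harm_neg : ∀ i ∉ B, weightedLaplacian w (-u) i = 0 := fun i hi => by
    rw [weightedLaplacian_neg, Pi.neg_apply, neg_eq_zero]
    exact harm i hi
  intro i
  obtain ⟨b, hb, hib⟩ := exists_mem_le_of_connected hw harm_neg hpath i
  obtain ⟨b', hb', hib'⟩ := exists_mem_le_of_connected hw harm hpath i
  exact ⟨(inf'_le u hb).trans (neg_le_neg_iff.1 hib), hib'.trans (le_sup' u hb')⟩

/-- Weak discrete maximum principle for the weighted graph Laplacian with nonnegative symmetric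
weights: if `u` is discretely harmonic at every interior (non-boundary) vertex and every
interior vertex is connected to the boundary set `B` through a path of positive weights, then
`u` attains its minimum and maximum over boundary values: `min_B u ≤ u i ≤ max_B u` for all `i`. -/
theorem weak_discrete_maximum_principle
    (n : ℕ) (w : Fin n → Fin n → ℝ) (hsym : ∀ i j, w i j = w j i)
    (hw : ∀ i j, 0 ≤ w i j)
    (B : Finset (Fin n)) (hB : B.Nonempty) (u : Fin n → ℝ)
    (harm : ∀ i ∉ B, ∑ j, w i j * (u i - u j) = 0)
    (conn : ∀ i ∉ B, ∃ m : ℕ, 1 ≤ m ∧ ∃ k : Fin (m + 1) → Fin n,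
      k 0 = i ∧ (∀ t : Fin m, 0 < w (k t.castSucc) (k t.succ)) ∧ k (Fin.last m) ∈ B) :
    ∀ i, B.inf' hB u ≤ u i ∧ u i ≤ B.sup' hB u :=
  weak_discrete_maximum_principle_general n w hw B hB u harm conn
end

section
/- Let n : ℕ, let w : Fin n → Fin n → ℝ be symmetric with w i j ≥ 0 for all i, j, and let τ ≥ 0. If u, u⁺ : Fin n → ℝ satisfy the implicit (backward) Euler step u⁺ i + τ * ∑_j w i j * (u⁺ i − u⁺ j) = u i for every i, and 0 ≤ u i ≤ 1 for every i, then 0 ≤ u⁺ i ≤ 1 for every i; i.e. the implicit Euler method with a nonnegatively weighted graph Laplacian preserves the bounds of the solution unconditionally in the time step. -/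
/-! Discrete maximum principle: at a vertex `m` where `u⁺` is minimal every term
`w m j * (u⁺ m - u⁺ j)` is `≤ 0`, so the step equation gives `u⁺ m ≥ u m ≥ 0`; the upper bound
follows by applying this to `-u`, `-u⁺`. -/

section ImplicitEuler

variable {ι : Type*} [Fintype ι] {w : ι → ι → ℝ} {τ : ℝ} {u up : ι → ℝ}

theorem le_implicit_euler_of_le (hw : ∀ i j, 0 ≤ w i j) (hτ : 0 ≤ τ)
    (hstep : ∀ i, up i + τ * ∑ j, w i j * (up i - up j) = u i) {a : ℝ} (ha : ∀ i, a ≤ u i)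
    (i : ι) : a ≤ up i := by
  have : Nonempty ι := ⟨i⟩
  obtain ⟨m, hm⟩ := Finite.exists_min up
  have hlap : ∑ j, w m j * (up m - up j) ≤ 0 :=
    Finset.sum_nonpos fun j _ => mul_nonpos_of_nonneg_of_nonpos (hw m j) (sub_nonpos.2 (hm j))
  calc a ≤ u m := ha m
    _ = up m + τ * ∑ j, w m j * (up m - up j) := (hstep m).symm
    _ ≤ up m := by linarith [mul_nonpos_of_nonneg_of_nonpos hτ hlap]
    _ ≤ up i := hm i

theorem implicit_euler_le_of_le (hw : ∀ i j, 0 ≤ w i j) (hτ : 0 ≤ τ)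
    (hstep : ∀ i, up i + τ * ∑ j, w i j * (up i - up j) = u i) {b : ℝ} (hb : ∀ i, u i ≤ b)
    (i : ι) : up i ≤ b := by
  have hstep_neg : ∀ i, -up i + τ * ∑ j, w i j * (-up i - -up j) = -u i := fun i => by
    simp only [← hstep i, neg_sub_neg, ← neg_sub (up i), mul_neg, Finset.sum_neg_distrib]
    ring
  exact neg_le_neg_iff.1 (le_implicit_euler_of_le hw hτ hstep_neg (fun i => neg_le_neg (hb i)) i)

end ImplicitEuler

theorem implicit_euler_preserves_bounds_general
    (n : ℕ) (w : Fin n → Fin n → ℝ)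
    (hw : ∀ i j, 0 ≤ w i j) (τ : ℝ) (hτ : 0 ≤ τ)
    (u up : Fin n → ℝ)
    (hstep : ∀ i, up i + τ * ∑ j, w i j * (up i - up j) = u i)
    (hbound : ∀ i, 0 ≤ u i ∧ u i ≤ 1) :
    ∀ i, 0 ≤ up i ∧ up i ≤ 1 := fun i =>
  ⟨le_implicit_euler_of_le hw hτ hstep (fun j => (hbound j).1) i,
    implicit_euler_le_of_le hw hτ hstep (fun j => (hbound j).2) i⟩

/-- The implicit (backward) Euler method with a nonnegatively weighted graph Laplacian
unconditionally preserves the bounds `0 ≤ u ≤ 1` of the solution. -/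
theorem implicit_euler_preserves_bounds
    (n : ℕ) (w : Fin n → Fin n → ℝ) (hsym : ∀ i j, w i j = w j i)
    (hw : ∀ i j, 0 ≤ w i j) (τ : ℝ) (hτ : 0 ≤ τ)
    (u up : Fin n → ℝ)
    (hstep : ∀ i, up i + τ * ∑ j, w i j * (up i - up j) = u i)
    (hbound : ∀ i, 0 ≤ u i ∧ u i ≤ 1) :
    ∀ i, 0 ≤ up i ∧ up i ≤ 1 :=
  implicit_euler_preserves_bounds_general n w hw τ hτ u up hstep hbound
end

section
/- Let A be an n × n real matrix (n ≥ 1) such that: (i) A i j ≤ 0 for all i ≠ j (Z-matrix); (ii) A i i > 0 for all i; (iii) every column sum is nonnegative: ∑_i A i j ≥ 0 for every j; (iv) at least one column sum is positive: ∃ j, ∑_i A i j > 0; and (v) A is irreducible: for every pair i ≠ j there exist m ≥ 1 and indices i = k₀, k₁, …, k_m = j with A k_t k_{t+1} ≠ 0 for all t < m. Then A is invertible and every entry of A⁻¹ is strictly positive. -/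
open Matrix Finset

namespace MMAux
variable {n : ℕ}

lemma powNonneg {C : Matrix (Fin n) (Fin n) ℝ} (hC : ∀ i j, 0 ≤ C i j) :
    ∀ (m : ℕ) (i j : Fin n), 0 ≤ (C ^ m) i j := by
  intro m
  induction m with
  | zero =>
    intro i j; rw [pow_zero, Matrix.one_apply]; split <;> norm_num
  | succ m ih =>
    intro i j
    rw [pow_succ, Matrix.mul_apply]
    exact Finset.sum_nonneg fun l _ => mul_nonneg (ih i l) (hC l j)

lemma colsumSucc (C : Matrix (Fin n) (Fin n) ℝ) (m : ℕ) (j : Fin n) :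
    ∑ i, (C ^ (m+1)) i j = ∑ l, (∑ i, C i l) * (C ^ m) l j := by
  simp only [pow_succ', Matrix.mul_apply, Finset.sum_mul]
  rw [Finset.sum_comm]

lemma walkReach {C : Matrix (Fin n) (Fin n) ℝ} (hC : ∀ i j, 0 ≤ C i j) :
    ∀ (m : ℕ) (k : Fin (m+1) → Fin n),
      (∀ t : Fin m, k t.castSucc = k t.succ ∨ 0 < C (k t.castSucc) (k t.succ)) →
      k 0 ≠ k (Fin.last m) →
      ∃ m' : ℕ, 0 < (C ^ m') (k 0) (k (Fin.last m)) := by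
  intro m
  induction m with
  | zero => intro k _ hne; exact absurd rfl hne
  | succ m ih =>
    intro k hk hne
    set k' : Fin (m+1) → Fin n := fun t => k t.succ with hk'
    have hlast : k' (Fin.last m) = k (Fin.last (m+1)) := by
      simp [hk', Fin.succ_last]
    have hk'edge : ∀ t : Fin m, k' t.castSucc = k' t.succ ∨ 0 < C (k' t.castSucc) (k' t.succ) := by
      intro t
      have h := hk t.succ
      have h1 : (t.succ : Fin (m+1)).castSucc = (t.castSucc : Fin (m+1)).succ := by
        simp only [Fin.succ_castSucc]
      rw [h1] at h
      exact h
    have h0 := hk 0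
    rw [Fin.castSucc_zero] at h0
    rcases h0 with h0 | h0
    · -- k 0 = k' 0
      have hk'0 : k' 0 = k (Fin.succ 0) := rfl
      have hne' : k' 0 ≠ k' (Fin.last m) := by rw [hlast, hk'0, ← h0]; exact hne
      obtain ⟨m', hm'⟩ := ih k' hk'edge hne'
      refine ⟨m', ?_⟩
      rw [h0]
      rw [hlast, hk'0] at hm'
      exact hm'
    · rcases eq_or_ne (k' 0) (k (Fin.last (m+1))) with heq | hne2
      · refine ⟨1, ?_⟩
        rw [pow_one, ← heq]
        exact h0
      · have hne' : k' 0 ≠ k' (Fin.last m) := by rwa [hlast]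
        obtain ⟨m', hm'⟩ := ih k' hk'edge hne'
        rw [hlast] at hm'
        refine ⟨m' + 1, ?_⟩
        rw [pow_succ', Matrix.mul_apply]
        have hsingle : C (k 0) (k' 0) * (C ^ m') (k' 0) (k (Fin.last (m+1))) ≤
            ∑ l, C (k 0) l * (C ^ m') l (k (Fin.last (m+1))) :=
          Finset.single_le_sum
            (f := fun l => C (k 0) l * (C ^ m') l (k (Fin.last (m+1))))
            (fun l _ => mul_nonneg (hC _ _) (powNonneg hC _ _ _)) (Finset.mem_univ _)
        exact lt_of_lt_of_le (mul_pos h0 hm') hsingle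

lemma keyZero {C : Matrix (Fin n) (Fin n) ℝ} (hC : ∀ i j, 0 ≤ C i j)
    {M : ℕ} (hM : ∀ j, ∑ i, (C ^ M) i j < 1)
    {x : Fin n → ℝ} (hx0 : ∀ i, 0 ≤ x i) (hx : ∀ i, x i ≤ C.mulVec x i) :
    x = 0 := by
  have hpow : ∀ m i, x i ≤ ((C ^ m).mulVec x) i := by
    intro m
    induction m with
    | zero => intro i; simp
    | succ m ih =>
      intro i
      have h1 : ((C ^ (m+1)).mulVec x) i = ((C ^ m).mulVec (C.mulVec x)) i := by
        rw [pow_succ, ← Matrix.mulVec_mulVec]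
      rw [h1]
      calc x i ≤ ((C ^ m).mulVec x) i := ih i
        _ ≤ ((C ^ m).mulVec (C.mulVec x)) i := by
            simp only [Matrix.mulVec, dotProduct]
            exact Finset.sum_le_sum fun l _ =>
              mul_le_mul_of_nonneg_left (hx l) (powNonneg hC m i l)
  by_contra hne
  have hex : ∃ l, 0 < x l := by
    by_contra hall
    push_neg at hall
    exact hne (funext fun i => le_antisymm (hall i) (hx0 i))
  obtain ⟨l₀, hl₀⟩ := hex
  have h1 : ∑ i, x i ≤ ∑ i, ((C ^ M).mulVec x) i := Finset.sum_le_sum fun i _ => hpow M i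
  have h2 : ∑ i, ((C ^ M).mulVec x) i = ∑ l, (∑ i, (C ^ M) i l) * x l := by
    simp only [Matrix.mulVec, dotProduct]
    rw [Finset.sum_comm]
    simp [Finset.sum_mul]
  have h3 : ∑ l, (∑ i, (C ^ M) i l) * x l < ∑ l, x l := by
    apply Finset.sum_lt_sum
    · intro l _
      calc (∑ i, (C ^ M) i l) * x l ≤ 1 * x l :=
            mul_le_mul_of_nonneg_right (hM l).le (hx0 l)
        _ = x l := one_mul _
    · exact ⟨l₀, Finset.mem_univ _, by
        calc (∑ i, (C ^ M) i l₀) * x l₀ < 1 * x l₀ :=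
              mul_lt_mul_of_pos_right (hM l₀) hl₀
          _ = x l₀ := one_mul _⟩
  rw [h2] at h1
  linarith

lemma invEntryPos {C E : Matrix (Fin n) (Fin n) ℝ} (hC : ∀ i j, 0 ≤ C i j)
    (hE0 : ∀ i j, 0 ≤ E i j) (hEeq : E = 1 + C * E) :
    ∀ (m : ℕ) (i j : Fin n), 0 < (C ^ m) i j → 0 < E i j := by
  have hEdiag : ∀ j, 0 < E j j := by
    intro j
    have : E j j = 1 + (C * E) j j := by
      conv_lhs => rw [hEeq]
      simp [Matrix.add_apply, Matrix.one_apply_eq]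
    rw [this, Matrix.mul_apply]
    have : 0 ≤ ∑ l, C j l * E l j :=
      Finset.sum_nonneg fun l _ => mul_nonneg (hC _ _) (hE0 _ _)
    linarith
  intro m
  induction m with
  | zero =>
    intro i j h
    rw [pow_zero, Matrix.one_apply] at h
    by_cases hij : i = j
    · subst hij; exact hEdiag i
    · rw [if_neg hij] at h; exact absurd h (lt_irrefl 0)
  | succ m ih =>
    intro i j h
    rw [pow_succ', Matrix.mul_apply] at h
    have hex : ∃ l, 0 < C i l * (C ^ m) l j := by
      by_contra hall
      push_neg at hall
      have : ∑ l, C i l * (C ^ m) l j ≤ 0 := Finset.sum_nonpos fun l _ => hall l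
      linarith
    obtain ⟨l, hl⟩ := hex
    have hCil : 0 < C i l := by
      rcases (hC i l).lt_or_eq with h' | h'
      · exact h'
      · rw [← h', zero_mul] at hl; exact absurd hl (lt_irrefl 0)
    have hCm : 0 < (C ^ m) l j := by
      rcases (powNonneg hC m l j).lt_or_eq with h' | h'
      · exact h'
      · rw [← h', mul_zero] at hl; exact absurd hl (lt_irrefl 0)
    have hElj := ih l j hCm
    have hEij : E i j = (1 : Matrix (Fin n) (Fin n) ℝ) i j + ∑ l', C i l' * E l' j := by
      conv_lhs => rw [hEeq]
      simp [Matrix.add_apply, Matrix.mul_apply]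
    rw [hEij]
    have h1 : (0:ℝ) ≤ (1 : Matrix (Fin n) (Fin n) ℝ) i j := by
      rw [Matrix.one_apply]; split <;> norm_num
    have h2 : C i l * E l j ≤ ∑ l', C i l' * E l' j :=
      Finset.single_le_sum (f := fun l' => C i l' * E l' j)
        (fun l' _ => mul_nonneg (hC _ _) (hE0 _ _)) (Finset.mem_univ _)
    have h3 : 0 < C i l * E l j := mul_pos hCil hElj
    linarith

end MMAux

set_option maxHeartbeats 1000000

/-- An irreducible M-matrix with positive diagonal, nonpositive off-diagonal entries,
nonnegative column sums and at least one positive column sum is invertible, and its inverse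
is entrywise strictly positive. -/
theorem m_matrix_inverse_positive
    (n : ℕ) (hn : 1 ≤ n) (A : Matrix (Fin n) (Fin n) ℝ)
    (hZ : ∀ i j, i ≠ j → A i j ≤ 0)
    (hdiag : ∀ i, 0 < A i i)
    (hcol : ∀ j, 0 ≤ ∑ i, A i j)
    (hcolpos : ∃ j, 0 < ∑ i, A i j)
    (hirr : ∀ i j, i ≠ j → ∃ m : ℕ, 1 ≤ m ∧ ∃ k : Fin (m + 1) → Fin n,
      k 0 = i ∧ k (Fin.last m) = j ∧ ∀ t : Fin m, A (k t.castSucc) (k t.succ) ≠ 0) :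
    IsUnit A ∧ ∀ i j, 0 < A⁻¹ i j := by
  classical
  obtain ⟨j₀, hj₀⟩ := hcolpos
  set C : Matrix (Fin n) (Fin n) ℝ :=
    Matrix.of (fun i j => (if i = j then 0 else -A i j) / A j j) with hCdef
  have hC0 : ∀ i j, 0 ≤ C i j := by
    intro i j
    by_cases h : i = j
    · simp [hCdef, h]
    · simp only [hCdef, Matrix.of_apply, if_neg h]
      exact div_nonneg (neg_nonneg.2 (hZ i j h)) (hdiag j).le
  have hCdiag : ∀ j, C j j = 0 := fun j => by simp [hCdef]
  have hedge : ∀ i j, i ≠ j → A i j ≠ 0 → 0 < C i j := by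
    intro i j hij hA
    simp only [hCdef, Matrix.of_apply, if_neg hij]
    exact div_pos (neg_pos.2 (lt_of_le_of_ne (hZ i j hij) hA)) (hdiag j)
  have hcolC : ∀ j, ∑ i, C i j = (A j j - ∑ i, A i j) / A j j := by
    intro j
    have h1 : ∑ i, C i j = (∑ i, (if i = j then 0 else -A i j)) / A j j := by
      simp only [hCdef, Matrix.of_apply]
      rw [Finset.sum_div]
    rw [h1]
    congr 1
    have h2 : ∀ i, (if i = j then 0 else -A i j) = -A i j + (if i = j then A i j else 0) := by
      intro i; by_cases h : i = j <;> simp [h]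
    simp only [h2]
    rw [Finset.sum_add_distrib, Finset.sum_ite_eq' Finset.univ j (fun i => A i j)]
    simp [Finset.sum_neg_distrib]
    ring
  have hle : ∀ j, ∑ i, C i j ≤ 1 := by
    intro j
    rw [hcolC, div_le_one (hdiag j)]
    linarith [hcol j]
  have hlt₀ : ∑ i, C i j₀ < 1 := by
    rw [hcolC, div_lt_one (hdiag j₀)]
    linarith
  -- column sums of powers
  have hcs_le_one : ∀ (m : ℕ) (j : Fin n), ∑ i, (C ^ m) i j ≤ 1 := by
    intro m
    induction m with
    | zero => intro j; simp [Matrix.one_apply]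
    | succ m ih =>
      intro j
      rw [MMAux.colsumSucc]
      calc ∑ l, (∑ i, C i l) * (C ^ m) l j ≤ ∑ l, (C ^ m) l j :=
            Finset.sum_le_sum fun l _ =>
              mul_le_of_le_one_left (MMAux.powNonneg hC0 m l j) (hle l)
        _ ≤ 1 := ih j
  have hcs_anti : ∀ (m m' : ℕ), m ≤ m' → ∀ j, ∑ i, (C ^ m') i j ≤ ∑ i, (C ^ m) i j := by
    intro m m' hmm'
    induction m' , hmm' using Nat.le_induction with
    | base => intro j; exact le_rfl
    | succ m' hm ih =>
      intro j
      calc ∑ i, (C ^ (m' + 1)) i j ≤ ∑ i, (C ^ m') i j := by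
            rw [MMAux.colsumSucc]
            exact Finset.sum_le_sum fun l _ =>
              mul_le_of_le_one_left (MMAux.powNonneg hC0 m' l j) (hle l)
        _ ≤ ∑ i, (C ^ m) i j := ih j
  have hreach : ∀ i j, i ≠ j → ∃ m : ℕ, 0 < (C ^ m) i j := by
    intro i j hij
    obtain ⟨m, _, k, hk0, hkl, hkE⟩ := hirr i j hij
    have hedges : ∀ t : Fin m, k t.castSucc = k t.succ ∨ 0 < C (k t.castSucc) (k t.succ) := by
      intro t
      rcases eq_or_ne (k t.castSucc) (k t.succ) with h | h
      · exact Or.inl h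
      · exact Or.inr (hedge _ _ h (hkE t))
    have hne : k 0 ≠ k (Fin.last m) := by rw [hk0, hkl]; exact hij
    obtain ⟨m', hm'⟩ := MMAux.walkReach hC0 m k hedges hne
    rw [hk0, hkl] at hm'
    exact ⟨m', hm'⟩
  have hMex : ∀ j, ∃ m : ℕ, ∑ i, (C ^ m) i j < 1 := by
    intro j
    by_cases hjj : j = j₀
    · subst hjj
      exact ⟨1, by simpa [pow_one] using hlt₀⟩
    · obtain ⟨m, hm⟩ := hreach j₀ j (Ne.symm hjj)
      refine ⟨m + 1, ?_⟩
      rw [MMAux.colsumSucc]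
      calc ∑ l, (∑ i, C i l) * (C ^ m) l j < ∑ l, (C ^ m) l j := by
            apply Finset.sum_lt_sum
            · intro l _
              exact mul_le_of_le_one_left (MMAux.powNonneg hC0 m l j) (hle l)
            · exact ⟨j₀, Finset.mem_univ _, mul_lt_of_lt_one_left hm hlt₀⟩
        _ ≤ 1 := hcs_le_one m j
  choose f hf using hMex
  set M : ℕ := Finset.univ.sup f with hMdef
  have hM : ∀ j, ∑ i, (C ^ M) i j < 1 := fun j =>
    lt_of_le_of_lt (hcs_anti (f j) M (Finset.le_sup (Finset.mem_univ j)) j) (hf j)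
  -- invertibility of 1 - C
  have hdet : (1 - C).det ≠ 0 := by
    intro h
    obtain ⟨v, hvne, hveq⟩ := (Matrix.exists_mulVec_eq_zero_iff).2 h
    have hfix : ∀ i, v i = C.mulVec v i := by
      intro i
      have := congrFun hveq i
      rw [Matrix.sub_mulVec, Matrix.one_mulVec] at this
      have h2 : v i - C.mulVec v i = 0 := this
      linarith
    have habs : ∀ i, |v i| ≤ C.mulVec (fun l => |v l|) i := by
      intro i
      rw [hfix i]
      calc |C.mulVec v i| = |∑ l, C i l * v l| := by simp [Matrix.mulVec, dotProduct]
        _ ≤ ∑ l, |C i l * v l| := Finset.abs_sum_le_sum_abs _ _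
        _ = ∑ l, C i l * |v l| := by
            refine Finset.sum_congr rfl fun l _ => ?_
            rw [abs_mul, abs_of_nonneg (hC0 i l)]
        _ = C.mulVec (fun l => |v l|) i := by simp [Matrix.mulVec, dotProduct]
    have hz := MMAux.keyZero hC0 hM (fun i => abs_nonneg (v i)) habs
    exact hvne (funext fun i => abs_eq_zero.1 (congrFun hz i))
  set d : Fin n → ℝ := fun j => A j j with hddef
  have hAfact : A = (1 - C) * Matrix.diagonal d := by
    ext i j
    rw [Matrix.mul_diagonal]
    by_cases h : i = j
    · subst h
      simp [Matrix.sub_apply, Matrix.one_apply_eq, hCdiag, hddef]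
    · simp only [Matrix.sub_apply, Matrix.one_apply_ne h, hCdef, Matrix.of_apply, if_neg h,
        hddef]
      rw [zero_sub, neg_div, neg_neg, div_mul_cancel₀]
      exact (hdiag j).ne'
  have hdetD : (Matrix.diagonal d).det ≠ 0 := by
    rw [Matrix.det_diagonal]
    exact (Finset.prod_pos fun j _ => hdiag j).ne'
  have hdetA : A.det ≠ 0 := by
    rw [hAfact, Matrix.det_mul]
    exact mul_ne_zero hdet hdetD
  have hunitA : IsUnit A := (Matrix.isUnit_iff_isUnit_det A).2 (isUnit_iff_ne_zero.2 hdetA)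
  set E : Matrix (Fin n) (Fin n) ℝ := (1 - C)⁻¹ with hEdef
  have hEl : (1 - C) * E = 1 := Matrix.mul_nonsing_inv _ (isUnit_iff_ne_zero.2 hdet)
  have hEeq : E = 1 + C * E := by
    have h1 : E - C * E = 1 := by
      calc E - C * E = (1 - C) * E := by rw [Matrix.sub_mul, Matrix.one_mul]
        _ = 1 := hEl
    have h2 := sub_eq_iff_eq_add.mp h1
    exact h2
  have hE0 : ∀ i j, 0 ≤ E i j := by
    intro p j
    set x : Fin n → ℝ := fun i => E i j with hxdef
    have hbv : ∀ i, (1 - C).mulVec x i = (1 : Matrix (Fin n) (Fin n) ℝ) i j := by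
      intro i
      have h1 : (1 - C).mulVec x i = ((1 - C) * E) i j := by
        simp [Matrix.mulVec, dotProduct, Matrix.mul_apply, hxdef]
      rw [h1, hEl]
    set z : Fin n → ℝ := fun i => max (-(x i)) 0 with hzdef
    have hz0 : ∀ i, 0 ≤ z i := fun i => le_max_right _ _
    have hxz : ∀ l, 0 ≤ x l + z l := by
      intro l
      rcases le_total 0 (x l) with h | h
      · have := hz0 l; linarith
      · have : z l = -(x l) := max_eq_left (by linarith)
        rw [this]; linarith
    have hone0 : ∀ i, (0:ℝ) ≤ (1 : Matrix (Fin n) (Fin n) ℝ) i j := by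
      intro i; rw [Matrix.one_apply]; split <;> norm_num
    have hzle : ∀ i, z i ≤ C.mulVec z i := by
      intro i
      have hCz0 : 0 ≤ C.mulVec z i := by
        simp only [Matrix.mulVec, dotProduct]
        exact Finset.sum_nonneg fun l _ => mul_nonneg (hC0 i l) (hz0 l)
      rcases le_or_gt 0 (x i) with h | h
      · have : z i = 0 := max_eq_right (by linarith)
        rw [this]; exact hCz0
      · have hzi : z i = -(x i) := max_eq_left (by linarith)
        have hfix : x i - C.mulVec x i = (1 : Matrix (Fin n) (Fin n) ℝ) i j := by
          have := hbv i
          rw [Matrix.sub_mulVec, Matrix.one_mulVec] at this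
          exact this
        have hsum : 0 ≤ C.mulVec x i + C.mulVec z i := by
          have heq : C.mulVec x i + C.mulVec z i = ∑ l, C i l * (x l + z l) := by
            simp [Matrix.mulVec, dotProduct, mul_add, Finset.sum_add_distrib]
          rw [heq]
          exact Finset.sum_nonneg fun l _ => mul_nonneg (hC0 i l) (hxz l)
        have := hone0 i
        rw [hzi]
        linarith
    have hz := MMAux.keyZero hC0 hM hz0 hzle
    have hzp := congrFun hz p
    have : -(x p) ≤ 0 := le_trans (le_max_left _ _) (le_of_eq hzp)
    simpa [hxdef] using neg_nonpos.mp this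
  have hEpos : ∀ i j, 0 < E i j := by
    intro i j
    rcases eq_or_ne i j with h | h
    · subst h
      exact MMAux.invEntryPos hC0 hE0 hEeq 0 i i (by simp [Matrix.one_apply_eq])
    · obtain ⟨m, hm⟩ := hreach i j h
      exact MMAux.invEntryPos hC0 hE0 hEeq m i j hm
  have hDinv : (Matrix.diagonal d)⁻¹ = Matrix.diagonal (fun j => (d j)⁻¹) := by
    apply Matrix.inv_eq_right_inv
    rw [Matrix.diagonal_mul_diagonal]
    have : (fun j => d j * (d j)⁻¹) = fun _ => (1:ℝ) := by
      funext j
      exact mul_inv_cancel₀ (hdiag j).ne'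
    rw [this, Matrix.diagonal_one]
  have hAinv : A⁻¹ = Matrix.diagonal (fun j => (d j)⁻¹) * E := by
    rw [hAfact, Matrix.mul_inv_rev, hDinv]
  refine ⟨hunitA, fun i j => ?_⟩
  rw [hAinv, Matrix.diagonal_mul]
  exact mul_pos (inv_pos.2 (hdiag i)) (hEpos i j)
end

section
/- Let d ≥ 1, let v : Fin (d+1) → EuclideanSpace ℝ (Fin d) be affinely independent, let b be the affine basis of EuclideanSpace ℝ (Fin d) with points v, and let T = convexHull ℝ (range v) be the corresponding d-simplex. Then for each index i, the integral over T of the square of the i-th barycentric coordinate equals 2/((d+1)(d+2)) times the volume of T: ∫_{x ∈ T} (b.coord i x)^2 ∂(volume) = (2 / ((d+1) * (d+2))) * (volume T).toReal. -/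
open MeasureTheory Set

section Aux

variable {d : ℕ}

/-- Barycentric coordinates transform affinely under a homothety centered at a basis point. -/
lemma coord_homothety_aux (b : AffineBasis (Fin (d + 1)) ℝ (EuclideanSpace ℝ (Fin d)))
    (i j : Fin (d + 1)) (r : ℝ) (y : EuclideanSpace ℝ (Fin d)) :
    b.coord j (AffineMap.homothety (b i) r y)
      = r * (b.coord j y - b.coord j (b i)) + b.coord j (b i) := by
  rw [AffineMap.homothety_apply, AffineMap.map_vadd, (b.coord j).linear.map_smul,
    AffineMap.linearMap_vsub]
  simp only [vsub_eq_sub, vadd_eq_add, smul_eq_mul]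

end Aux

/-- The integral over a `d`-simplex `T` of the square of a barycentric coordinate (P1 finite
element basis function) equals `2 / ((d+1)(d+2))` times the volume of `T`: this gives the
diagonal entries `M_ii = 2|ω_i| / ((d+1)(d+2))` of the P1 finite element mass matrix. -/
theorem integral_sq_barycentric_coord
    (d : ℕ) (hd : 1 ≤ d) (v : Fin (d + 1) → EuclideanSpace ℝ (Fin d))
    (hv : AffineIndependent ℝ v)
    (b : AffineBasis (Fin (d + 1)) ℝ (EuclideanSpace ℝ (Fin d)))
    (hb : ⇑b = v) (i : Fin (d + 1)) :
    ∫ x in convexHull ℝ (Set.range v), (b.coord i x) ^ 2 =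
      (2 / (((d : ℝ) + 1) * ((d : ℝ) + 2))) *
        (volume (convexHull ℝ (Set.range v))).toReal := by
  classical
  set T : Set (EuclideanSpace ℝ (Fin d)) := convexHull ℝ (Set.range v) with hT
  have hTeq : T = {x | ∀ j, 0 ≤ b.coord j x} := by
    rw [hT, ← hb]; exact b.convexHull_eq_nonneg_coord
  set f : EuclideanSpace ℝ (Fin d) → ℝ := fun x => b.coord i x with hf
  have hfc : Continuous f := (b.coord i).continuous_of_finiteDimensional
  have hfm : Measurable f := hfc.measurable
  have hTcompact : IsCompact T := (Set.finite_range v).isCompact_convexHull ℝ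
  have hTm : MeasurableSet T := hTcompact.isClosed.measurableSet
  have hμfin : volume T ≠ ⊤ := hTcompact.measure_lt_top.ne
  -- coordinates at the vertex `v i`
  have hδ : ∀ j, b.coord j (v i) = if j = i then 1 else 0 := by
    intro j; rw [← hb]; exact b.coord_apply j i
  -- on T, f ≤ 1
  have hf_le_one : ∀ x ∈ T, f x ≤ 1 := by
    intro x hx
    rw [hTeq] at hx
    have hsum : ∑ j, b.coord j x = 1 := b.sum_coord_apply_eq_one x
    calc f x ≤ ∑ j, b.coord j x :=
          Finset.single_le_sum (fun j _ => hx j) (Finset.mem_univ i)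
      _ = 1 := hsum
  -- key geometric identity
  have hkey : ∀ t : ℝ, 0 < t → t < 1 →
      {a | t ≤ f a} ∩ T = AffineMap.homothety (v i) (1 - t) '' T := by
    intro t ht0 ht1
    have hr : (0 : ℝ) < 1 - t := by linarith
    have hcoord : ∀ (r : ℝ) (j : Fin (d + 1)) (y : EuclideanSpace ℝ (Fin d)),
        b.coord j (AffineMap.homothety (v i) r y)
          = r * (b.coord j y - (if j = i then 1 else 0)) + (if j = i then 1 else 0) := by
      intro r j y
      have := coord_homothety_aux b i j r y
      rw [hb] at this
      rw [this, hδ j]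
    ext x
    constructor
    · rintro ⟨hle, hxT⟩
      refine ⟨AffineMap.homothety (v i) (1 - t)⁻¹ x, ?_, ?_⟩
      · rw [hTeq]
        intro j
        rw [hcoord]
        rw [hTeq] at hxT
        by_cases hji : j = i
        · rw [if_pos hji, hji]
          have hle' : t ≤ b.coord i x := hle
          have heq : (1 - t)⁻¹ * (b.coord i x - 1) + 1 = (b.coord i x - t) / (1 - t) := by
            field_simp
            ring
          rw [heq]
          exact div_nonneg (by linarith) hr.le
        · simp only [if_neg hji, sub_zero, add_zero]
          exact mul_nonneg (inv_nonneg.mpr hr.le) (hxT j)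
      · have : AffineMap.homothety (v i) (1 - t)
            (AffineMap.homothety (v i) (1 - t)⁻¹ x)
            = AffineMap.homothety (v i) ((1 - t) * (1 - t)⁻¹) x := by
          rw [AffineMap.homothety_mul]; rfl
        rw [this, mul_inv_cancel₀ hr.ne', AffineMap.homothety_one]; rfl
    · rintro ⟨y, hyT, rfl⟩
      rw [hTeq] at hyT
      have hxcoord := hcoord (1 - t)
      constructor
      · show t ≤ b.coord i _
        rw [hxcoord i y, if_pos rfl]
        nlinarith [hyT i]
      · rw [hTeq]
        intro j
        rw [hxcoord j y]
        by_cases hji : j = i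
        · simp only [if_pos hji]; nlinarith [hyT j]
        · simp only [if_neg hji, sub_zero, add_zero]
          exact mul_nonneg hr.le (hyT j)
  -- measure of superlevel sets
  have hmeas : ∀ t : ℝ, 0 < t → t < 1 →
      volume ({a | t ≤ f a} ∩ T) = ENNReal.ofReal ((1 - t) ^ d) * volume T := by
    intro t ht0 ht1
    rw [hkey t ht0 ht1, Measure.addHaar_image_homothety, finrank_euclideanSpace_fin,
      abs_of_nonneg (pow_nonneg (by linarith : (0:ℝ) ≤ 1 - t) d)]
  -- superlevel sets are empty for t > 1
  have hempty : ∀ t : ℝ, 1 < t → {a | t ≤ f a} ∩ T = ∅ := by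
    intro t ht
    ext x
    simp only [Set.mem_inter_iff, Set.mem_setOf_eq, Set.mem_empty_iff_false, iff_false]
    rintro ⟨hle, hxT⟩
    exact absurd (le_trans hle (hf_le_one x hxT)) (by linarith)
  -- nonnegativity of f on T
  have hf_nn : 0 ≤ᵐ[volume.restrict T] f := by
    filter_upwards [ae_restrict_mem hTm] with x hx
    rw [hTeq] at hx
    exact hx i
  -- Bochner to Lebesgue integral
  have hsq_nn : 0 ≤ᵐ[volume.restrict T] fun x => f x ^ 2 :=
    Filter.Eventually.of_forall fun x => sq_nonneg _
  rw [show (∫ x in T, (b.coord i x) ^ 2) = ∫ x in T, f x ^ 2 from rfl,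
    integral_eq_lintegral_of_nonneg_ae hsq_nn
      ((hfc.pow 2).aestronglyMeasurable)]
  -- layer cake with g t = 2 * t
  have hlayer := lintegral_comp_eq_lintegral_meas_le_mul (volume.restrict T) hf_nn
    hfm.aemeasurable (g := fun t => 2 * t)
    (fun t _ => (continuous_const.mul continuous_id).intervalIntegrable 0 t)
    (by
      filter_upwards [ae_restrict_mem measurableSet_Ioi] with t ht
      have : (0:ℝ) < t := ht
      positivity)
  have hInner : ∀ ω, (∫ t in (0:ℝ)..f ω, 2 * t) = f ω ^ 2 := by
    intro ω
    rw [intervalIntegral.integral_const_mul, integral_id]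
    ring
  simp only [hInner] at hlayer
  rw [hlayer]
  -- compute the t-integral
  have hset : Set.Ioi (0:ℝ) = Set.Ioc 0 1 ∪ Set.Ioi 1 := (Set.Ioc_union_Ioi_eq_Ioi zero_le_one).symm
  have hrestr : ∀ t : ℝ, (volume.restrict T) {a | t ≤ f a} = volume ({a | t ≤ f a} ∩ T) := by
    intro t
    rw [Measure.restrict_apply (measurableSet_le measurable_const hfm)]
  rw [hset, lintegral_union measurableSet_Ioi (Set.Ioc_disjoint_Ioi le_rfl)]
  have hpart2 : ∫⁻ t in Set.Ioi (1:ℝ),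
      (volume.restrict T) {a | t ≤ f a} * ENNReal.ofReal (2 * t) = 0 := by
    have hz : ∀ t ∈ Set.Ioi (1:ℝ),
        (volume.restrict T) {a | t ≤ f a} * ENNReal.ofReal (2 * t) = 0 := by
      intro t ht
      rw [hrestr t, hempty t ht, measure_empty, zero_mul]
    calc ∫⁻ t in Set.Ioi (1:ℝ), (volume.restrict T) {a | t ≤ f a} * ENNReal.ofReal (2 * t)
        = ∫⁻ _ in Set.Ioi (1:ℝ), 0 :=
          setLIntegral_congr_fun measurableSet_Ioi hz
      _ = 0 := lintegral_zero
  rw [hpart2, add_zero]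
  have hIooIoc : ∫⁻ t in Set.Ioc (0:ℝ) 1,
        (volume.restrict T) {a | t ≤ f a} * ENNReal.ofReal (2 * t)
      = ∫⁻ t in Set.Ioo (0:ℝ) 1,
        (volume.restrict T) {a | t ≤ f a} * ENNReal.ofReal (2 * t) := by
    exact (setLIntegral_congr Ioo_ae_eq_Ioc).symm
  rw [hIooIoc]
  have hcongr : ∫⁻ t in Set.Ioo (0:ℝ) 1,
        (volume.restrict T) {a | t ≤ f a} * ENNReal.ofReal (2 * t)
      = ∫⁻ t in Set.Ioo (0:ℝ) 1, volume T * ENNReal.ofReal ((1 - t) ^ d * (2 * t)) := by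
    apply setLIntegral_congr_fun measurableSet_Ioo
    intro t ht
    beta_reduce
    rw [hrestr t, hmeas t ht.1 ht.2,
      ENNReal.ofReal_mul (p := (1 - t) ^ d) (pow_nonneg (by linarith [ht.2] : (0:ℝ) ≤ 1 - t) d)]
    ring
  have hgm : Measurable fun t : ℝ => ENNReal.ofReal ((1 - t) ^ d * (2 * t)) := by
    fun_prop
  rw [hcongr, lintegral_const_mul _ hgm]
  -- evaluate the remaining lintegral
  have hg_cont : Continuous fun t : ℝ => (1 - t) ^ d * (2 * t) :=
    ((continuous_const.sub continuous_id).pow d).mul (continuous_const.mul continuous_id)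
  have hInt : IntegrableOn (fun t : ℝ => (1 - t) ^ d * (2 * t)) (Set.Ioo 0 1) volume :=
    (hg_cont.integrableOn_Ioc (a := 0) (b := 1)).mono_set Set.Ioo_subset_Ioc_self
  have hval : (∫ t in Set.Ioo (0:ℝ) 1, (1 - t) ^ d * (2 * t))
      = 2 / (((d : ℝ) + 1) * ((d : ℝ) + 2)) := by
    have h1 : (∫ t in Set.Ioo (0:ℝ) 1, (1 - t) ^ d * (2 * t))
        = ∫ t in (0:ℝ)..1, (1 - t) ^ d * (2 * t) := by
      rw [intervalIntegral.integral_of_le zero_le_one, ← integral_Ioc_eq_integral_Ioo]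
    rw [h1]
    have h2 : (∫ t in (0:ℝ)..1, (1 - t) ^ d * (2 * t))
        = ∫ s in (0:ℝ)..1, s ^ d * (2 * (1 - s)) := by
      have := intervalIntegral.integral_comp_sub_left
        (a := (0:ℝ)) (b := 1) (fun s => s ^ d * (2 * (1 - s))) 1
      simp only [sub_sub_cancel, sub_zero, sub_self] at this
      rw [← this]
    rw [h2]
    have h3 : ∀ s : ℝ, s ^ d * (2 * (1 - s)) = 2 * s ^ d - 2 * s ^ (d + 1) := by
      intro s; ring
    simp_rw [h3]
    rw [intervalIntegral.integral_sub
        ((intervalIntegral.intervalIntegrable_pow d).const_mul 2)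
        ((intervalIntegral.intervalIntegrable_pow (d + 1)).const_mul 2),
      intervalIntegral.integral_const_mul, intervalIntegral.integral_const_mul,
      integral_pow, integral_pow]
    have hd1 : ((d : ℝ) + 1) ≠ 0 := by positivity
    have hd2 : ((d : ℝ) + 2) ≠ 0 := by positivity
    push_cast
    field_simp
    ring
  have hlint : (∫⁻ t in Set.Ioo (0:ℝ) 1, ENNReal.ofReal ((1 - t) ^ d * (2 * t)))
      = ENNReal.ofReal (2 / (((d : ℝ) + 1) * ((d : ℝ) + 2))) := by
    rw [← ofReal_integral_eq_lintegral_ofReal hInt ?_, hval]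
    filter_upwards [ae_restrict_mem measurableSet_Ioo] with t ht
    have h1 : 0 ≤ 1 - t := by linarith [ht.2]
    have h2 : 0 ≤ t := ht.1.le
    positivity
  rw [hlint, ENNReal.toReal_mul, ENNReal.toReal_ofReal (by positivity)]
  ring
end
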